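/- Let d ≥ 3 be an integer, a_c = (d−2)/2, and let (a,b) ∈ ℝ² satisfy a ≤ b < a+1 and a < a_c. Set n = d/(1+a−b) and α = (a_c−a)(a+1−b)/(a_c−a+b), so α > 0 and n ≥ d > 2. Let λ, μ ∈ ℝ with λ² − μ² = 1, and define f(x) = λ + μ tanh(α ln|x|) for x ∈ ℝ^d∖{0}. Then, with L̄f(x) = |x|^{2(1−α)} ((1+|x|^{2α})²/4) [ Δf(x) − (2a/|x|²) x·∇f(x) − (n−2)(2α|x|^{2α−2}/(1+|x|^{2α})) x·∇f(x) ] and Γ̄(f)(x) = |x|^{2(1−α)} ((1+|x|^{2α})²/4) |∇f(x)|², the following pointwise identity holds on ℝ^d∖{0}: f·L̄f − (n/2) Γ̄(f) = (nα²/2)(1 − f²). -/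

import Mathlib

/-!
Write `t = log ‖x‖`. For a function `g (log ‖x‖)` of `t` alone, the gradient is `g' t • x / ‖x‖²`
and the Laplacian is `(g'' + (d - 2) g') / ‖x‖²`, while the weight of `L̄` and `Γ̄` is
`‖x‖² cosh² (α t)` and the drift coefficient is `α (1 + tanh (α t)) / ‖x‖²`. The choice of `n`
and `α` gives `(n - 2) α = d - 2 - 2a`, so for `g = λ + μ tanh (α ·)`, where
`g' = μ α sech² (α t)` and `g'' = -2 α tanh (α t) g'`, one finds `L̄f = -n μ α² tanh (α t)` and
`Γ̄ f = μ² α² sech² (α t)`. The identity then reduces to `λ² - μ² = 1`.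
-/

open MeasureTheory Real
open scoped RealInnerProductSpace

/-- The Euclidean Laplacian of a function on `EuclideanSpace ℝ (Fin d)`. -/
noncomputable def euclideanLaplacian {d : ℕ} (u : EuclideanSpace ℝ (Fin d) → ℝ)
    (x : EuclideanSpace ℝ (Fin d)) : ℝ :=
  ∑ i : Fin d, fderiv ℝ (fun y => fderiv ℝ u y (EuclideanSpace.single i 1)) x
    (EuclideanSpace.single i 1)

theorem Real.hasDerivAt_tanh (t : ℝ) : HasDerivAt tanh (1 - tanh t ^ 2) t := by
  have h : HasDerivAt (fun t => sinh t / cosh t) _ t :=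
    (hasDerivAt_sinh t).div (hasDerivAt_cosh t) (cosh_pos t).ne'
  rw [← funext tanh_eq_sinh_div_cosh] at h
  refine h.congr_deriv ?_
  rw [tanh_eq_sinh_div_cosh]
  field_simp

theorem Real.hasDerivAt_tanh_const_mul (α t : ℝ) :
    HasDerivAt (fun t => tanh (α * t)) (α * (1 - tanh (α * t) ^ 2)) t := by
  have h := (Real.hasDerivAt_tanh (α * t)).comp t ((hasDerivAt_id' t).const_mul α)
  refine h.congr_deriv ?_
  ring

theorem Real.cosh_sq_mul_one_sub_tanh_sq (t : ℝ) : cosh t ^ 2 * (1 - tanh t ^ 2) = 1 := by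
  rw [tanh_eq_sinh_div_cosh]
  field_simp
  linear_combination cosh_sq_sub_sinh_sq t

section Radial

variable {d : ℕ} {φ : ℝ → ℝ}

theorem hasGradientAt_comp_norm_sq {φ' : ℝ} (x : EuclideanSpace ℝ (Fin d))
    (hφ : HasDerivAt φ φ' (‖x‖ ^ 2)) :
    HasGradientAt (fun y => φ (‖y‖ ^ 2)) ((2 * φ') • x) x := by
  rw [hasGradientAt_iff_hasFDerivAt]
  refine (hφ.comp_hasFDerivAt x (hasStrictFDerivAt_norm_sq x).hasFDerivAt).congr_fderiv ?_
  ext v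
  simp only [smul_apply, coe_innerSL_apply, nsmul_eq_mul, Nat.cast_ofNat,
    smul_eq_mul, map_smul, InnerProductSpace.toDual_apply_apply]
  ring

theorem euclideanLaplacian_comp_norm_sq {φ' : ℝ → ℝ} {φ'' : ℝ} (x : EuclideanSpace ℝ (Fin d))
    (hφ : ∀ᶠ s in nhds (‖x‖ ^ 2), HasDerivAt φ (φ' s) s) (hφ' : HasDerivAt φ' φ'' (‖x‖ ^ 2)) :
    euclideanLaplacian (fun y => φ (‖y‖ ^ 2)) x = 2 * d * φ' (‖x‖ ^ 2) + 4 * ‖x‖ ^ 2 * φ'' := by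
  have hnear : ∀ᶠ y in nhds x, HasDerivAt φ (φ' (‖y‖ ^ 2)) (‖y‖ ^ 2) :=
    ((continuous_norm.pow 2).tendsto x).eventually hφ
  have hpartial : ∀ i : Fin d,
      fderiv ℝ (fun y => fderiv ℝ (fun y => φ (‖y‖ ^ 2)) y (EuclideanSpace.single i 1)) x
        (EuclideanSpace.single i 1) = 2 * φ' (‖x‖ ^ 2) + 4 * φ'' * x i ^ 2 := by
    intro i
    have hev : (fun y => fderiv ℝ (fun y => φ (‖y‖ ^ 2)) y (EuclideanSpace.single i 1)) =ᶠ[nhds x]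
        fun y => 2 * φ' (‖y‖ ^ 2) * y i := by
      filter_upwards [hnear] with y hy
      rw [(hasGradientAt_comp_norm_sq y hy).hasFDerivAt.fderiv]
      simp [EuclideanSpace.inner_single_right]
    have hcoord : HasFDerivAt (fun y : EuclideanSpace ℝ (Fin d) => y i)
        (EuclideanSpace.proj i : EuclideanSpace ℝ (Fin d) →L[ℝ] ℝ) x :=
      (EuclideanSpace.proj (𝕜 := ℝ) i).hasFDerivAt
    have h : HasFDerivAt (fun y => 2 * φ' (‖y‖ ^ 2) * y i) _ x :=
      ((hφ'.comp_hasFDerivAt x (hasStrictFDerivAt_norm_sq x).hasFDerivAt).const_mul 2).mul hcoord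
    rw [hev.fderiv_eq, h.fderiv]
    simp only [Function.comp_apply, add_apply, smul_apply,
      PiLp.proj_apply, PiLp.single_eq_same, smul_eq_mul, coe_innerSL_apply,
      EuclideanSpace.inner_single_right, nsmul_eq_mul, Nat.cast_ofNat, conj_trivial]
    ring
  have hsum : ∑ i : Fin d, x i ^ 2 = ‖x‖ ^ 2 := by
    simp [EuclideanSpace.norm_sq_eq, Real.norm_eq_abs, sq_abs]
  unfold euclideanLaplacian
  simp only [hpartial, Finset.sum_add_distrib, ← Finset.mul_sum, hsum, Finset.sum_const,
    Finset.card_univ, Fintype.card_fin, nsmul_eq_mul]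
  ring

end Radial

theorem Real.log_sq_div_two (r : ℝ) : log (r ^ 2) / 2 = log r := by
  rw [Real.log_pow, Nat.cast_ofNat, mul_div_cancel_left₀ _ two_ne_zero]

section LogRadial

variable {d : ℕ} {g : ℝ → ℝ}

theorem comp_log_norm_eq_comp_norm_sq :
    (fun y : EuclideanSpace ℝ (Fin d) => g (log ‖y‖)) = fun y => g (log (‖y‖ ^ 2) / 2) := by
  simp only [Real.log_sq_div_two]

theorem hasDerivAt_comp_log_div_two {g' : ℝ} {s : ℝ} (hs : 0 < s)
    (hg : HasDerivAt g g' (log s / 2)) :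
    HasDerivAt (fun s => g (log s / 2)) (g' / (2 * s)) s := by
  have h := hg.comp s ((hasDerivAt_log hs.ne').div_const 2)
  refine h.congr_deriv ?_
  field_simp

theorem hasGradientAt_comp_log_norm {g' : ℝ} {x : EuclideanSpace ℝ (Fin d)} (hx : x ≠ 0)
    (hg : HasDerivAt g g' (log ‖x‖)) :
    HasGradientAt (fun y => g (log ‖y‖)) ((g' / ‖x‖ ^ 2) • x) x := by
  have hs : 0 < ‖x‖ ^ 2 := by positivity
  rw [comp_log_norm_eq_comp_norm_sq]
  have h := hasGradientAt_comp_norm_sq x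
    (hasDerivAt_comp_log_div_two (g := g) hs (by rwa [Real.log_sq_div_two]))
  convert h using 2
  field_simp

theorem euclideanLaplacian_comp_log_norm {g' : ℝ → ℝ} {g'' : ℝ} {x : EuclideanSpace ℝ (Fin d)}
    (hx : x ≠ 0) (hg : ∀ᶠ t in nhds (log ‖x‖), HasDerivAt g (g' t) t)
    (hg' : HasDerivAt g' g'' (log ‖x‖)) :
    euclideanLaplacian (fun y => g (log ‖y‖)) x = (g'' + (d - 2) * g' (log ‖x‖)) / ‖x‖ ^ 2 := by
  have hs : 0 < ‖x‖ ^ 2 := by positivity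
  have hlog : log (‖x‖ ^ 2) / 2 = log ‖x‖ := Real.log_sq_div_two ‖x‖
  have hlog_tendsto : Filter.Tendsto (fun s => log s / 2) (nhds (‖x‖ ^ 2)) (nhds (log ‖x‖)) := by
    rw [← hlog]
    exact ((continuousAt_log hs.ne').div_const 2).tendsto
  have hφ : ∀ᶠ s in nhds (‖x‖ ^ 2),
      HasDerivAt (fun s => g (log s / 2)) (g' (log s / 2) / (2 * s)) s := by
    filter_upwards [hlog_tendsto.eventually hg, lt_mem_nhds hs] with s hgs hs'
    exact hasDerivAt_comp_log_div_two hs' hgs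
  have hφ' : HasDerivAt (fun s => g' (log s / 2) / (2 * s))
      ((g'' - 2 * g' (log ‖x‖)) / (4 * (‖x‖ ^ 2) ^ 2)) (‖x‖ ^ 2) := by
    have h := (hasDerivAt_comp_log_div_two hs (hlog ▸ hg')).div
      ((hasDerivAt_id' _).const_mul 2) (by positivity)
    refine h.congr_deriv ?_
    rw [hlog]
    field_simp
    ring
  rw [comp_log_norm_eq_comp_norm_sq, euclideanLaplacian_comp_norm_sq x hφ hφ', hlog]
  field_simp
  ring

end LogRadial

section Weights

variable {r : ℝ} (α : ℝ)

theorem Real.rpow_two_mul_eq_exp_sq (hr : 0 < r) : r ^ (2 * α) = exp (α * log r) ^ 2 := by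
  rw [Real.rpow_def_of_pos hr, ← Real.exp_nat_mul]
  ring_nf

theorem Real.two_mul_rpow_div_one_add_rpow (hr : 0 < r) :
    2 * α * r ^ (2 * α - 2) / (1 + r ^ (2 * α)) = α * (1 + tanh (α * log r)) / r ^ 2 := by
  rw [Real.rpow_sub hr, Real.rpow_two, Real.rpow_two_mul_eq_exp_sq α hr, tanh_eq_sinh_div_cosh,
    sinh_eq, cosh_eq, exp_neg]
  have := exp_pos (α * log r)
  field_simp
  ring

end Weights

theorem ckn_exponent_relation {d a b n α : ℝ} (hb : 1 + a - b ≠ 0) (ha : (d - 2) / 2 - a + b ≠ 0)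
    (hn : n = d / (1 + a - b)) (hα : α = ((d - 2) / 2 - a) * (a + 1 - b) / ((d - 2) / 2 - a + b)) :
    (n - 2) * α = d - 2 - 2 * a := by
  have hn' : (n - 2) * (1 + a - b) = 2 * ((d - 2) / 2 - a + b) := by
    rw [hn]
    field_simp
    ring
  have hα' : α * ((d - 2) / 2 - a + b) = ((d - 2) / 2 - a) * (1 + a - b) := by
    rw [hα, div_mul_cancel₀ _ ha]
    ring
  apply mul_right_cancel₀ (mul_ne_zero hb ha)
  linear_combination α * ((d - 2) / 2 - a + b) * hn' + 2 * ((d - 2) / 2 - a + b) * hα'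

section SphericalCKN

variable {d : ℕ}

noncomputable def cknWeight (α : ℝ) (x : EuclideanSpace ℝ (Fin d)) : ℝ :=
  ‖x‖ ^ (2 * (1 - α)) * ((1 + ‖x‖ ^ (2 * α)) ^ 2 / 4)

noncomputable def sphericalCKNGenerator (a n α : ℝ) (u : EuclideanSpace ℝ (Fin d) → ℝ)
    (x : EuclideanSpace ℝ (Fin d)) : ℝ :=
  cknWeight α x * (euclideanLaplacian u x - 2 * a / ‖x‖ ^ 2 * ⟪x, gradient u x⟫
    - (n - 2) * (2 * α * ‖x‖ ^ (2 * α - 2) / (1 + ‖x‖ ^ (2 * α))) * ⟪x, gradient u x⟫)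

noncomputable def sphericalCKNCarreDuChamp (α : ℝ) (u : EuclideanSpace ℝ (Fin d) → ℝ)
    (x : EuclideanSpace ℝ (Fin d)) : ℝ :=
  cknWeight α x * ‖gradient u x‖ ^ 2

variable {g : ℝ → ℝ} {x : EuclideanSpace ℝ (Fin d)}

theorem cknWeight_eq (α : ℝ) (hx : x ≠ 0) :
    cknWeight α x = ‖x‖ ^ 2 * cosh (α * log ‖x‖) ^ 2 := by
  have hr : 0 < ‖x‖ := norm_pos_iff.mpr hx
  rw [cknWeight, show 2 * (1 - α) = 2 - 2 * α by ring, Real.rpow_sub hr, Real.rpow_two,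
    Real.rpow_two_mul_eq_exp_sq α hr, cosh_eq, exp_neg]
  have := exp_pos (α * log ‖x‖)
  field_simp
  ring

theorem sphericalCKNCarreDuChamp_comp_log_norm (α : ℝ) {g' : ℝ} (hx : x ≠ 0)
    (hg : HasDerivAt g g' (log ‖x‖)) :
    sphericalCKNCarreDuChamp α (fun y => g (log ‖y‖)) x = cosh (α * log ‖x‖) ^ 2 * g' ^ 2 := by
  have hr : ‖x‖ ≠ 0 := norm_ne_zero_iff.mpr hx
  rw [sphericalCKNCarreDuChamp, (hasGradientAt_comp_log_norm hx hg).gradient, cknWeight_eq α hx,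
    norm_smul, mul_pow, Real.norm_eq_abs, sq_abs]
  field_simp

theorem sphericalCKNGenerator_comp_log_norm (a n α : ℝ) {g' : ℝ → ℝ} {g'' : ℝ} (hx : x ≠ 0)
    (hg : ∀ᶠ t in nhds (log ‖x‖), HasDerivAt g (g' t) t) (hg' : HasDerivAt g' g'' (log ‖x‖)) :
    sphericalCKNGenerator a n α (fun y => g (log ‖y‖)) x = cosh (α * log ‖x‖) ^ 2 *
      (g'' + (d - 2 - 2 * a - (n - 2) * α * (1 + tanh (α * log ‖x‖))) * g' (log ‖x‖)) := by
  have hr : ‖x‖ ≠ 0 := norm_ne_zero_iff.mpr hx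
  rw [sphericalCKNGenerator, (hasGradientAt_comp_log_norm hx hg.self_of_nhds).gradient,
    euclideanLaplacian_comp_log_norm hx hg hg', cknWeight_eq α hx,
    Real.two_mul_rpow_div_one_add_rpow α (norm_pos_iff.mpr hx), real_inner_smul_right,
    real_inner_self_eq_norm_sq]
  field_simp
  ring

end SphericalCKN

theorem spherical_ckn_extremal_identity_general (d : ℕ) (hd : 3 ≤ d) (a b n α lam mu : ℝ)
    (hab : a ≤ b) (hba : b < a + 1)
    (hn : n = (d : ℝ) / (1 + a - b))
    (hα : α = (((d : ℝ) - 2) / 2 - a) * (a + 1 - b) / (((d : ℝ) - 2) / 2 - a + b))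
    (hnorm : lam ^ 2 - mu ^ 2 = 1)
    (f : EuclideanSpace ℝ (Fin d) → ℝ)
    (hf : ∀ x, f x = lam + mu * Real.tanh (α * Real.log ‖x‖)) :
    ∀ x : EuclideanSpace ℝ (Fin d), x ≠ 0 →
      f x * (‖x‖ ^ (2 * (1 - α)) * ((1 + ‖x‖ ^ (2 * α)) ^ 2 / 4) *
          (euclideanLaplacian f x - 2 * a / ‖x‖ ^ 2 * ⟪x, gradient f x⟫
            - (n - 2) * (2 * α * ‖x‖ ^ (2 * α - 2) / (1 + ‖x‖ ^ (2 * α))) *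
              ⟪x, gradient f x⟫))
        - n / 2 * (‖x‖ ^ (2 * (1 - α)) * ((1 + ‖x‖ ^ (2 * α)) ^ 2 / 4) *
            ‖gradient f x‖ ^ 2) =
      n * α ^ 2 / 2 * (1 - f x ^ 2) := by
  intro x hx
  have hd' : (3 : ℝ) ≤ d := by exact_mod_cast hd
  have hexp : (n - 2) * α = d - 2 - 2 * a :=
    ckn_exponent_relation (by linarith) (by linarith) hn hα
  obtain rfl : f = fun y => (fun t => lam + mu * tanh (α * t)) (log ‖y‖) := funext hf
  have hg (t : ℝ) := ((Real.hasDerivAt_tanh_const_mul α t).const_mul mu).const_add lam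
  have hg' :=
    ((((Real.hasDerivAt_tanh_const_mul α (log ‖x‖)).pow 2).const_sub 1).const_mul α).const_mul mu
  change _ * sphericalCKNGenerator a n α _ x - n / 2 * sphericalCKNCarreDuChamp α _ x = _
  rw [sphericalCKNGenerator_comp_log_norm a n α hx (.of_forall hg) hg',
    sphericalCKNCarreDuChamp_comp_log_norm α hx (hg _)]
  set T := tanh (α * log ‖x‖)
  set C := cosh (α * log ‖x‖)
  have hCT : C ^ 2 * (1 - T ^ 2) = 1 := Real.cosh_sq_mul_one_sub_tanh_sq _
  linear_combination
    (-(n * mu * α ^ 2 * T * (lam + mu * T)) - n / 2 * mu ^ 2 * α ^ 2 * (1 - T ^ 2)) * hCT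
      - (lam + mu * T) * mu * α * C ^ 2 * (1 - T ^ 2) * hexp + n * α ^ 2 / 2 * hnorm

/-- For f = λ + μ tanh(α ln|x|) with λ² - μ² = 1, one has the pointwise identity
f·L̄f - (n/2)Γ̄(f) = (nα²/2)(1 - f²) on the spherical CKN space. -/
theorem spherical_ckn_extremal_identity (d : ℕ) (hd : 3 ≤ d) (a b n α lam mu : ℝ)
    (hab : a ≤ b) (hba : b < a + 1) (ha : a < ((d : ℝ) - 2) / 2)
    (hn : n = (d : ℝ) / (1 + a - b))
    (hα : α = (((d : ℝ) - 2) / 2 - a) * (a + 1 - b) / (((d : ℝ) - 2) / 2 - a + b))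
    (hnorm : lam ^ 2 - mu ^ 2 = 1)
    (f : EuclideanSpace ℝ (Fin d) → ℝ)
    (hf : ∀ x, f x = lam + mu * Real.tanh (α * Real.log ‖x‖)) :
    ∀ x : EuclideanSpace ℝ (Fin d), x ≠ 0 →
      f x * (‖x‖ ^ (2 * (1 - α)) * ((1 + ‖x‖ ^ (2 * α)) ^ 2 / 4) *
          (euclideanLaplacian f x - 2 * a / ‖x‖ ^ 2 * ⟪x, gradient f x⟫
            - (n - 2) * (2 * α * ‖x‖ ^ (2 * α - 2) / (1 + ‖x‖ ^ (2 * α))) *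
              ⟪x, gradient f x⟫))
        - n / 2 * (‖x‖ ^ (2 * (1 - α)) * ((1 + ‖x‖ ^ (2 * α)) ^ 2 / 4) *
            ‖gradient f x‖ ^ 2) =
      n * α ^ 2 / 2 * (1 - f x ^ 2) :=
  spherical_ckn_extremal_identity_general d hd a b n α lam mu hab hba hn hα hnorm f hf
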